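/- Let ρ₁ := (1/4)(I⊗I) + (1/12)(I⊗Y + I⊗Z − X⊗X + Y⊗X + Z⊗X). For every two-qubit Clifford unitary U, i.e. every 4×4 unitary U such that for all P₁,P₂ ∈ {I,X,Y,Z} there exist Q₁,Q₂ ∈ {I,X,Y,Z} and a scalar c ∈ ℂ with U(P₁⊗P₂)U† = c·(Q₁⊗Q₂), the 2×2 matrix N with entries N_{a,b} = (U ρ₁ U†)_{(a,0),(b,0)} for a,b ∈ {0,1} (i.e. the output of projecting the second qubit onto |0⟩ after applying U) satisfies |tr(NX)| + |tr(NY)| + |tr(NZ)| ≤ tr(N). That is, every two-to-one-qubit stabilizer reduction applied to ρ₁ outputs a nonnegative multiple of a mixture of single-qubit stabilizer states (a state in the octahedron |x|+|y|+|z| ≤ 1). -/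

import Mathlib

open Matrix Kronecker ComplexOrder

noncomputable def Id2 : Matrix (Fin 2) (Fin 2) ℂ := 1
noncomputable def PX : Matrix (Fin 2) (Fin 2) ℂ := !![0, 1; 1, 0]
noncomputable def PY : Matrix (Fin 2) (Fin 2) ℂ := !![0, -Complex.I; Complex.I, 0]
noncomputable def PZ : Matrix (Fin 2) (Fin 2) ℂ := !![1, 0; 0, -1]

/-- The four Pauli matrices `I, X, Y, Z`. -/
noncomputable def Pauli : Fin 4 → Matrix (Fin 2) (Fin 2) ℂ := ![Id2, PX, PY, PZ]

/-- The two-qubit state `ρ₁ = (1/4)I⊗I + (1/12)(I⊗Y + I⊗Z − X⊗X + Y⊗X + Z⊗X)`. -/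
noncomputable def rho1 : Matrix (Fin 2 × Fin 2) (Fin 2 × Fin 2) ℂ :=
  (1 / 4 : ℂ) • (Id2 ⊗ₖ Id2) +
    (1 / 12 : ℂ) • (Id2 ⊗ₖ PY + Id2 ⊗ₖ PZ - PX ⊗ₖ PX + PY ⊗ₖ PX + PZ ⊗ₖ PX)

/-! The five Pauli terms of `ρ₁` square to one and pairwise anticommute. Conjugation by a
Clifford unitary is an algebra automorphism sending each of them to `±` a Pauli product
`P ⊗ Q`, so the images still pairwise anticommute. Postselecting the second qubit on `|0⟩`
sends `P ⊗ Q` to `Q₀₀ • P`, which vanishes unless `Q ∈ {I, Z}`; as `I` and `Z` commute, the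
surviving single-qubit Paulis `P` pairwise anticommute. So either the only survivor is `I`,
or every survivor is one of `X, Y, Z` and each occurs at most once; in both cases
`N = I/4 + (1/12) ∑ ±P` lies in the stabilizer octahedron. -/

section Kronecker

variable {R m n : Type*} [CommRing R]

variable (R m) in
@[simps]
def postselect (j : n) : Matrix (m × n) (m × n) R →ₗ[R] Matrix m m R where
  toFun M := M.submatrix (·, j) (·, j)
  map_add' _ _ := rfl
  map_smul' _ _ := rfl

theorem postselect_one [DecidableEq m] [DecidableEq n] (j : n) : postselect R m j 1 = 1 := by
  ext a b
  simp [one_apply]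

theorem postselect_kronecker (j : n) (A : Matrix m m R) (B : Matrix n n R) :
    postselect R m j (A ⊗ₖ B) = B j j • A := by
  ext a b
  simp [mul_comm]

variable [Fintype m] [Fintype n]

theorem Commute.kronecker {A C : Matrix m m R} {B D : Matrix n n R} (hAC : Commute A C)
    (hBD : Commute B D) : Commute (A ⊗ₖ B) (C ⊗ₖ D) := by
  rw [Commute, SemiconjBy, ← mul_kronecker_mul, ← mul_kronecker_mul, hAC.eq, hBD.eq]

theorem kronecker_mul_kronecker_eq_neg_of_left {A C : Matrix m m R} {B D : Matrix n n R}
    (hAC : A * C = -(C * A)) (hBD : Commute B D) :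
    (A ⊗ₖ B) * (C ⊗ₖ D) = -((C ⊗ₖ D) * (A ⊗ₖ B)) := by
  rw [← mul_kronecker_mul, ← mul_kronecker_mul, hAC, hBD.eq]
  ext
  simp

theorem kronecker_mul_kronecker_eq_neg_of_right {A C : Matrix m m R} {B D : Matrix n n R}
    (hAC : Commute A C) (hBD : B * D = -(D * B)) :
    (A ⊗ₖ B) * (C ⊗ₖ D) = -((C ⊗ₖ D) * (A ⊗ₖ B)) := by
  rw [← mul_kronecker_mul, ← mul_kronecker_mul, hAC.eq, hBD]
  ext
  simp

end Kronecker

section Algebra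

variable {K A : Type*} [Field K] [Ring A] [Algebra K A] [Nontrivial A]

theorem not_commute_of_mul_eq_neg [NeZero (2 : K)] {a b : A} (ha : a * a = 1) (hb : b * b = 1)
    (hab : a * b = -(b * a)) : ¬Commute a b := by
  intro hcomm
  have hba : (2 : K) • (b * a) = 0 := by
    rw [two_smul]
    nth_rewrite 1 [← hcomm.eq]
    rw [hab, neg_add_cancel]
  have : a * a = (a * b) * (b * a) := by rw [mul_assoc, ← mul_assoc b, hb, one_mul]
  rw [(smul_eq_zero.1 hba).resolve_left two_ne_zero, mul_zero, ha] at this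
  exact one_ne_zero this

theorem eq_one_or_eq_neg_one_of_map_eq_smul {F : Type*} [FunLike F A A] [MonoidHomClass F A A]
    (f : F) {a b : A} {c : K} (ha : a * a = 1) (hb : b * b = 1) (hab : f a = c • b) :
    c = 1 ∨ c = -1 := by
  have : algebraMap K A (c * c) = algebraMap K A 1 := by
    rw [Algebra.algebraMap_eq_smul_one, ← hb, ← smul_mul_smul, ← hab, ← map_mul, ha, map_one,
      map_one]
  exact mul_self_eq_one_iff.1 ((algebraMap K A).injective this)

end Algebra

theorem pauli_zero : Pauli 0 = 1 := rfl

theorem pauli_mul_self (p : Fin 4) : Pauli p * Pauli p = 1 := by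
  fin_cases p <;> ext i j <;> fin_cases i <;> fin_cases j <;>
    simp [Pauli, Id2, PX, PY, PZ]

theorem pauli_mul_eq_neg {p q : Fin 4} (hp : p ≠ 0) (hq : q ≠ 0) (hpq : p ≠ q) :
    Pauli p * Pauli q = -(Pauli q * Pauli p) := by
  fin_cases p <;> fin_cases q <;> simp at hp hq hpq <;>
    ext i j <;> fin_cases i <;> fin_cases j <;> simp [Pauli, PX, PY, PZ]

theorem trace_pauli_mul_pauli (p q : Fin 4) :
    (Pauli p * Pauli q).trace = if p = q then 2 else 0 := by
  fin_cases p <;> fin_cases q <;> simp [Pauli, Id2, PX, PY, PZ, trace_fin_two] <;>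
    norm_num

theorem pauli_apply_zero_zero (p : Fin 4) : Pauli p 0 0 = if p = 0 ∨ p = 3 then 1 else 0 := by
  fin_cases p <;> simp [Pauli, Id2, PX, PY, PZ]

theorem commute_pauli {p q : Fin 4} (h : p = q ∨ p = 0 ∨ q = 0) :
    Commute (Pauli p) (Pauli q) := by
  rcases h with rfl | rfl | rfl
  exacts [Commute.refl _, Commute.one_left _, Commute.one_right _]

theorem kronecker_pauli_mul_self (p q : Fin 4) :
    (Pauli p ⊗ₖ Pauli q) * (Pauli p ⊗ₖ Pauli q) = 1 := by
  rw [← mul_kronecker_mul, pauli_mul_self, pauli_mul_self, one_kronecker_one]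

open Finset in
theorem sum_abs_le_three_add {ι : Type*} (s : Finset ι) (a : ι → Fin 4) (e : ι → ℝ)
    (he : ∀ i ∈ s, |e i| ≤ 1) (hs : (s : Set ι).Pairwise fun i j => a i ≠ a j ∧ a i ≠ 0) :
    |∑ i ∈ s with a i = 1, e i| + |∑ i ∈ s with a i = 2, e i| + |∑ i ∈ s with a i = 3, e i| ≤
      3 + ∑ i ∈ s with a i = 0, e i := by
  by_cases h0 : ∃ i ∈ s, a i = 0
  · obtain ⟨i, hi, hai⟩ := h0
    have hs_eq : s = {i} := eq_singleton_iff_unique_mem.2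
      ⟨hi, fun j hj => by_contra fun hji => (hs hi hj (Ne.symm hji)).2 hai⟩
    have hei := abs_le.1 (he i hi)
    subst hs_eq
    simp only [filter_singleton, hai, zero_ne_one, ↓reduceIte, sum_empty, abs_zero, Fin.reduceEq,
      add_zero, sum_singleton]
    linarith
  · push Not at h0
    have hfiber (k : Fin 4) : |∑ i ∈ s with a i = k, e i| ≤ 1 := by
      have hcard : #{i ∈ s | a i = k} ≤ 1 := card_le_one.2 fun i hi j hj =>
        by_contra fun hij => (hs (mem_filter.1 hi).1 (mem_filter.1 hj).1 hij).1
          ((mem_filter.1 hi).2.trans (mem_filter.1 hj).2.symm)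
      calc |∑ i ∈ s with a i = k, e i| ≤ ∑ i ∈ s with a i = k, |e i| := abs_sum_le_sum_abs _ _
        _ ≤ #{i ∈ s | a i = k} • 1 :=
          sum_le_card_nsmul _ _ _ fun i hi => he i (mem_filter.1 hi).1
        _ ≤ 1 := by simpa using hcard
    have hzero : ∑ i ∈ s with a i = 0, e i = 0 := by
      rw [filter_false_of_mem h0, sum_empty]
    linarith [hfiber 1, hfiber 2, hfiber 3]

theorem trace_mul_pauli {ι : Type*} (s : Finset ι) (a : ι → Fin 4) (e : ι → ℝ) (α β : ℝ)
    (k : Fin 4) :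
    (((α : ℂ) • 1 + (β : ℂ) • ∑ i ∈ s, (e i : ℂ) • Pauli (a i)) * Pauli k).trace =
      ((2 * (if k = 0 then α else 0) + 2 * β * ∑ i ∈ s with a i = k, e i : ℝ) : ℂ) := by
  rw [← pauli_zero]
  simp only [add_mul, smul_mul_assoc, Finset.sum_mul, trace_add, trace_smul, trace_sum,
    trace_pauli_mul_pauli, smul_eq_mul, Finset.sum_filter, @eq_comm (Fin 4) 0 k]
  push_cast [apply_ite, Finset.mul_sum]
  ring_nf

theorem sum_norm_trace_le_trace_of_pairwise_not_commute {ι : Type*} (s : Finset ι) (a : ι → Fin 4)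
    (e : ι → ℝ) {α β : ℝ} (hβ : 0 ≤ β) (hαβ : 3 * β ≤ α) (he : ∀ i ∈ s, |e i| ≤ 1)
    (hs : (s : Set ι).Pairwise fun i j => ¬Commute (Pauli (a i)) (Pauli (a j))) :
    let N := (α : ℂ) • 1 + (β : ℂ) • ∑ i ∈ s, (e i : ℂ) • Pauli (a i)
    ((‖(N * PX).trace‖ + ‖(N * PY).trace‖ + ‖(N * PZ).trace‖ : ℝ) : ℂ) ≤ N.trace := by
  intro N
  have hs' : (s : Set ι).Pairwise fun i j => a i ≠ a j ∧ a i ≠ 0 := hs.mono' fun i j h =>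
    ⟨fun h' => h (commute_pauli (Or.inl h')), fun h' => h (commute_pauli (Or.inr (Or.inl h')))⟩
  have key := mul_le_mul_of_nonneg_left (sum_abs_le_three_add s a e he hs') hβ
  rw [show N.trace = (N * Pauli 0).trace by rw [pauli_zero, mul_one],
    show PX = Pauli 1 from rfl, show PY = Pauli 2 from rfl, show PZ = Pauli 3 from rfl]
  simp only [N, trace_mul_pauli, Complex.norm_real, Real.norm_eq_abs, Complex.real_le_real,
    Fin.reduceEq, if_false, if_true, mul_zero, zero_add, abs_mul, abs_two, abs_of_nonneg hβ]
  nlinarith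

def rho1Term : Fin 5 → Fin 4 × Fin 4 := ![(0, 2), (0, 3), (1, 1), (2, 1), (3, 1)]

noncomputable def rho1Pauli (i : Fin 5) : Matrix (Fin 2 × Fin 2) (Fin 2 × Fin 2) ℂ :=
  Pauli (rho1Term i).1 ⊗ₖ Pauli (rho1Term i).2

def rho1Coeff : Fin 5 → ℝ := ![1, 1, -1, 1, 1]

theorem rho1_eq_sum : rho1 = (1 / 4 : ℂ) • 1 +
    (1 / 12 : ℂ) • ∑ i, (rho1Coeff i : ℂ) • rho1Pauli i := by
  simp only [rho1, Fin.sum_univ_five, rho1Pauli, rho1Term, rho1Coeff, Pauli]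
  simp [Id2, sub_eq_add_neg]

theorem rho1Pauli_mul_eq_neg {i j : Fin 5} (hij : i ≠ j) :
    rho1Pauli i * rho1Pauli j = -(rho1Pauli j * rho1Pauli i) := by
  fin_cases i <;> fin_cases j <;> first
    | exact absurd rfl hij
    | exact kronecker_mul_kronecker_eq_neg_of_left
        (pauli_mul_eq_neg (by decide) (by decide) (by decide)) (commute_pauli (by decide))
    | exact kronecker_mul_kronecker_eq_neg_of_right (commute_pauli (by decide))
        (pauli_mul_eq_neg (by decide) (by decide) (by decide))

theorem exists_postselect_map_rho1_eq
    (φ : Matrix (Fin 2 × Fin 2) (Fin 2 × Fin 2) ℂ ≃ₐ[ℂ] Matrix (Fin 2 × Fin 2) (Fin 2 × Fin 2) ℂ)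
    (hφ : ∀ p₁ p₂ : Fin 4, ∃ (q₁ q₂ : Fin 4) (c : ℂ),
      φ (Pauli p₁ ⊗ₖ Pauli p₂) = c • (Pauli q₁ ⊗ₖ Pauli q₂)) :
    ∃ (s : Finset (Fin 5)) (a : Fin 5 → Fin 4) (e : Fin 5 → ℝ), (∀ i ∈ s, |e i| ≤ 1) ∧
      (s : Set (Fin 5)).Pairwise (fun i j => ¬Commute (Pauli (a i)) (Pauli (a j))) ∧
      postselect ℂ (Fin 2) 0 (φ rho1) =
        ((1 / 4 : ℝ) : ℂ) • 1 + ((1 / 12 : ℝ) : ℂ) • ∑ i ∈ s, (e i : ℂ) • Pauli (a i) := by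
  choose q₁ q₂ c hc using hφ
  set a : Fin 5 → Fin 4 := fun i => q₁ (rho1Term i).1 (rho1Term i).2
  set b : Fin 5 → Fin 4 := fun i => q₂ (rho1Term i).1 (rho1Term i).2
  have hP (i : Fin 5) : φ (rho1Pauli i) =
      c (rho1Term i).1 (rho1Term i).2 • (Pauli (a i) ⊗ₖ Pauli (b i)) :=
    hc (rho1Term i).1 (rho1Term i).2
  have hc_sign (i : Fin 5) : ∃ g : ℝ, |g| = 1 ∧ (g : ℂ) = c (rho1Term i).1 (rho1Term i).2 := by
    rcases eq_one_or_eq_neg_one_of_map_eq_smul φ (kronecker_pauli_mul_self _ _)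
      (kronecker_pauli_mul_self _ _) (hP i) with h | h
    exacts [⟨1, by simp [h]⟩, ⟨-1, by simp [h]⟩]
  choose g hg hgc using hc_sign
  refine ⟨Finset.univ.filter (fun i => b i = 0 ∨ b i = 3), a, fun i => rho1Coeff i * g i,
    ?_, ?_, ?_⟩
  · intro i _
    rw [abs_mul, hg, mul_one]
    fin_cases i <;> simp [rho1Coeff]
  · intro i hi j hj hij hcomm
    simp only [Finset.coe_filter, Finset.mem_univ, true_and, Set.mem_ofPred_eq] at hi hj
    have hb : Commute (Pauli (b i)) (Pauli (b j)) := commute_pauli (by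
      rcases hi with h | h <;> rcases hj with h' | h' <;> simp [h, h'])
    have himage : Commute (φ (rho1Pauli i)) (φ (rho1Pauli j)) := by
      rw [hP i, hP j]
      exact ((hcomm.kronecker hb).smul_left _).smul_right _
    exact not_commute_of_mul_eq_neg (K := ℂ) (kronecker_pauli_mul_self _ _)
      (kronecker_pauli_mul_self _ _) (rho1Pauli_mul_eq_neg hij)
      ((commute_map_iff φ.injective).1 himage)
  · rw [rho1_eq_sum]
    simp only [map_add, map_smul, map_sum, map_one, hP, postselect_one, postselect_kronecker,
      pauli_apply_zero_zero, ite_smul, one_smul, zero_smul, smul_ite, smul_zero, Finset.sum_ite,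
      Finset.sum_const_zero, add_zero, ← hgc, smul_smul]
    push_cast
    rfl

/-- Every two-to-one-qubit stabilizer reduction applied to `ρ₁` — i.e. conjugation by
a two-qubit Clifford unitary `U` followed by projecting the second qubit onto `|0⟩` —
outputs a nonnegative multiple of a mixture of single-qubit stabilizer states:
`|tr(NX)| + |tr(NY)| + |tr(NZ)| ≤ tr(N)` where `N_{a,b} = (Uρ₁U†)_{(a,0),(b,0)}`. -/
theorem stmt_15 (U : Matrix (Fin 2 × Fin 2) (Fin 2 × Fin 2) ℂ)
    (hU : U * Uᴴ = 1) (hU' : Uᴴ * U = 1)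
    (hClifford : ∀ p₁ p₂ : Fin 4, ∃ (q₁ q₂ : Fin 4) (c : ℂ),
      U * (Pauli p₁ ⊗ₖ Pauli p₂) * Uᴴ = c • (Pauli q₁ ⊗ₖ Pauli q₂)) :
    let N : Matrix (Fin 2) (Fin 2) ℂ := fun a b => (U * rho1 * Uᴴ) (a, 0) (b, 0)
    ((‖(N * PX).trace‖ + ‖(N * PY).trace‖ +
        ‖(N * PZ).trace‖ : ℝ) : ℂ) ≤ N.trace := by
  let φ := (Unitary.conjStarAlgAut ℂ _ ⟨U, Unitary.mem_iff.2 ⟨hU', hU⟩⟩).toAlgEquiv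
  obtain ⟨s, a, e, he, hs, hN⟩ := exists_postselect_map_rho1_eq φ hClifford
  have hN' : (fun a b => (U * rho1 * Uᴴ) (a, 0) (b, 0) : Matrix (Fin 2) (Fin 2) ℂ) =
      postselect ℂ (Fin 2) 0 (φ rho1) := rfl
  rw [hN', hN]
  exact sum_norm_trace_le_trace_of_pairwise_not_commute s a e (by norm_num) (by norm_num) he hs
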